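/- arXiv:1910.09002 — 2 statements merged into one kernel-verified Lean document; each statement's English description precedes it below -/
import Mathlib

section
/- Let (G, p) be a finite critical net in ℝ^k satisfying the balance condition, and let 0 < r₁ ≤ r₂ be such that ‖p l‖ ≥ r₂ for every leaf l. For r > 0 set L(r) = ∑_{edges {x,y}} μ¹([p x, p y] ∩ closedBall(0,r)), where μ¹ is the one-dimensional Hausdorff measure. Then the length density is monotone: L(r₁)/r₁ ≤ L(r₂)/r₂. -/
open scoped RealInnerProductSpace MeasureTheory Topology
open Set MeasureTheory Function Filter

noncomputable section CritNetAux

variable {E : Type*} [NormedAddCommGroup E] [InnerProductSpace ℝ E]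

/-- unit direction from `a` to `b` -/
def cnDir (a b : E) : E := ‖b - a‖⁻¹ • (b - a)

/-- parameter set of the part of the segment within distance `r` of origin -/
def cnS (a b : E) (r : ℝ) : Set ℝ := {t | t ∈ Icc (0:ℝ) ‖b - a‖ ∧ ‖a + t • cnDir a b‖ ≤ r}

/-- length of the part of the segment `[a,b]` within the closed ball of radius `r` -/
def cnLen (a b : E) (r : ℝ) : ℝ := (volume (cnS a b r)).toReal

open Classical in
/-- crossing count of the segment with the sphere of radius `r` -/
def cnC (a b : E) (r : ℝ) : ℝ :=
  if (cnS a b r).Nonempty then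
    ((if ‖b‖ ≤ r then 0 else 1) + (if ‖a‖ ≤ r then 0 else 1)) else 0

variable {a b : E}

lemma norm_cnDir (hab : a ≠ b) : ‖cnDir a b‖ = 1 := by
  have : b - a ≠ 0 := sub_ne_zero.2 (Ne.symm hab)
  simp [cnDir, norm_smul, inv_mul_cancel₀, norm_ne_zero_iff.mpr this]

lemma T_smul_cnDir (hab : a ≠ b) : ‖b - a‖ • cnDir a b = b - a := by
  have : b - a ≠ 0 := sub_ne_zero.2 (Ne.symm hab)
  rw [cnDir, smul_smul, mul_inv_cancel₀ (norm_ne_zero_iff.mpr this), one_smul]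

lemma point_T (hab : a ≠ b) : a + ‖b - a‖ • cnDir a b = b := by
  rw [T_smul_cnDir hab]; abel

lemma cn_lip (hab : a ≠ b) (s t : ℝ) :
    ‖a + s • cnDir a b‖ ≤ ‖a + t • cnDir a b‖ + |s - t| := by
  have h1 : a + s • cnDir a b = (a + t • cnDir a b) + (s - t) • cnDir a b := by
    rw [sub_smul]; abel
  rw [h1]
  refine (norm_add_le _ _).trans ?_
  rw [norm_smul, norm_cnDir hab, mul_one, Real.norm_eq_abs]

lemma cnS_subset (r : ℝ) : cnS a b r ⊆ Icc (0:ℝ) ‖b - a‖ := fun _ ht => ht.1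

lemma isCompact_cnS (r : ℝ) : IsCompact (cnS a b r) := by
  have hcont : Continuous fun t : ℝ => ‖a + t • cnDir a b‖ :=
    (continuous_const.add (continuous_id.smul continuous_const)).norm
  have hclosed : IsClosed (cnS a b r) := by
    have : cnS a b r = Icc (0:ℝ) ‖b - a‖ ∩ (fun t : ℝ => ‖a + t • cnDir a b‖) ⁻¹' Iic r := by
      ext t; simp [cnS]
    rw [this]
    exact isClosed_Icc.inter (isClosed_Iic.preimage hcont)
  exact isCompact_Icc.of_isClosed_subset hclosed (cnS_subset r)

lemma volume_cnS_ne_top (r : ℝ) : volume (cnS a b r) ≠ ⊤ :=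
  ((measure_mono (cnS_subset r)).trans_lt measure_Icc_lt_top).ne

lemma convex_cnS (hab : a ≠ b) (r : ℝ) : Convex ℝ (cnS a b r) := by
  intro t₁ h₁ t₂ h₂ u v hu hv huv
  constructor
  · exact convex_Icc (0:ℝ) ‖b - a‖ h₁.1 h₂.1 hu hv huv
  · have key : a + (u * t₁ + v * t₂) • cnDir a b
        = u • (a + t₁ • cnDir a b) + v • (a + t₂ • cnDir a b) := by
      have : u • (a + t₁ • cnDir a b) + v • (a + t₂ • cnDir a b)
          = (u + v) • a + (u * t₁ + v * t₂) • cnDir a b := by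
        simp only [smul_add, add_smul, smul_smul]; abel
      rw [this, huv, one_smul]
    calc ‖a + (u * t₁ + v * t₂) • cnDir a b‖
        ≤ u * ‖a + t₁ • cnDir a b‖ + v * ‖a + t₂ • cnDir a b‖ := by
          rw [key]
          refine (norm_add_le _ _).trans ?_
          rw [norm_smul, norm_smul, Real.norm_eq_abs, Real.norm_eq_abs,
            abs_of_nonneg hu, abs_of_nonneg hv]
      _ ≤ u * r + v * r := by
          gcongr
          exacts [h₁.2, h₂.2]
      _ = r := by rw [← add_mul, huv, one_mul]

lemma cnS_eq_Icc (hab : a ≠ b) {r : ℝ} (hne : (cnS a b r).Nonempty) :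
    cnS a b r = Icc (sInf (cnS a b r)) (sSup (cnS a b r)) := by
  have hcpt := isCompact_cnS (a := a) (b := b) r
  refine Subset.antisymm (fun t ht => ⟨csInf_le hcpt.bddBelow ht, le_csSup hcpt.bddAbove ht⟩) ?_
  exact ((convex_cnS hab r).ordConnected).out (hcpt.sInf_mem hne) (hcpt.sSup_mem hne)

lemma sInf_le_sSup_cnS (hab : a ≠ b) {r : ℝ} (hne : (cnS a b r).Nonempty) :
    sInf (cnS a b r) ≤ sSup (cnS a b r) := by
  have hcpt := isCompact_cnS (a := a) (b := b) r
  exact csInf_le_csSup hne hcpt.bddBelow hcpt.bddAbove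

lemma cnLen_eq (hab : a ≠ b) {r : ℝ} (hne : (cnS a b r).Nonempty) :
    cnLen a b r = sSup (cnS a b r) - sInf (cnS a b r) := by
  rw [cnLen]
  conv_lhs => rw [cnS_eq_Icc hab hne]
  rw [Real.volume_Icc, ENNReal.toReal_ofReal (sub_nonneg.2 (sInf_le_sSup_cnS hab hne))]

lemma cnS_mono (a b : E) : Monotone (cnS a b) := fun r r' h t ht => ⟨ht.1, ht.2.trans h⟩

lemma cnLen_mono (a b : E) : Monotone (cnLen a b) := fun r r' h =>
  ENNReal.toReal_mono (volume_cnS_ne_top r') (measure_mono (cnS_mono a b h))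

lemma cnLen_nonneg (a b : E) (r : ℝ) : 0 ≤ cnLen a b r := ENNReal.toReal_nonneg

lemma inner_point_cnDir (hab : a ≠ b) (t : ℝ) :
    ⟪a + t • cnDir a b, cnDir a b⟫ = ⟪a, cnDir a b⟫ + t := by
  rw [inner_add_left, real_inner_smul_left, real_inner_self_eq_norm_sq, norm_cnDir hab]
  ring

lemma T_mem_iff (hab : a ≠ b) {r : ℝ} : ‖b - a‖ ∈ cnS a b r ↔ ‖b‖ ≤ r := by
  constructor
  · intro h; rw [← point_T hab]; exact h.2
  · intro h
    exact ⟨⟨norm_nonneg _, le_rfl⟩, by rw [point_T hab]; exact h⟩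

lemma zero_mem_iff (hab : a ≠ b) {r : ℝ} : (0:ℝ) ∈ cnS a b r ↔ ‖a‖ ≤ r := by
  constructor
  · intro h
    have := h.2; simpa using this
  · intro h
    exact ⟨⟨le_rfl, norm_nonneg _⟩, by simpa using h⟩

lemma sSup_eq_T_iff (hab : a ≠ b) {r : ℝ} (hne : (cnS a b r).Nonempty) :
    sSup (cnS a b r) = ‖b - a‖ ↔ ‖b‖ ≤ r := by
  have hcpt := isCompact_cnS (a := a) (b := b) r
  constructor
  · intro h
    have := hcpt.sSup_mem hne
    rw [h] at this
    exact (T_mem_iff hab).1 this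
  · intro h
    have hT : ‖b - a‖ ∈ cnS a b r := (T_mem_iff hab).2 h
    exact le_antisymm ((hcpt.sSup_mem hne).1.2) (le_csSup hcpt.bddAbove hT)

lemma sInf_eq_zero_iff (hab : a ≠ b) {r : ℝ} (hne : (cnS a b r).Nonempty) :
    sInf (cnS a b r) = 0 ↔ ‖a‖ ≤ r := by
  have hcpt := isCompact_cnS (a := a) (b := b) r
  constructor
  · intro h
    have := hcpt.sInf_mem hne
    rw [h] at this
    exact (zero_mem_iff hab).1 this
  · intro h
    have h0 : (0:ℝ) ∈ cnS a b r := (zero_mem_iff hab).2 h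
    exact le_antisymm (csInf_le hcpt.bddBelow h0) ((hcpt.sInf_mem hne).1.1)

/-- Per-edge stationarity inequality. -/
lemma cnLen_le (hab : a ≠ b) {r : ℝ} (hr : 0 < r) :
    cnLen a b r ≤ r * cnC a b r + (if ‖b‖ ≤ r then ⟪b, cnDir a b⟫ else 0)
      + (if ‖a‖ ≤ r then -⟪a, cnDir a b⟫ else 0) := by
  classical
  by_cases hne : (cnS a b r).Nonempty
  · have hcpt := isCompact_cnS (a := a) (b := b) r
    set α := sInf (cnS a b r) with hα
    set β := sSup (cnS a b r) with hβ
    have hβmem : β ∈ cnS a b r := hcpt.sSup_mem hne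
    have hαmem : α ∈ cnS a b r := hcpt.sInf_mem hne
    have hlen : cnLen a b r = β - α := cnLen_eq hab hne
    have key1 : ⟪a, cnDir a b⟫ + β ≤ (if ‖b‖ ≤ r then ⟪b, cnDir a b⟫ else r) := by
      split_ifs with hbr
      · have hβT : β = ‖b - a‖ := (sSup_eq_T_iff hab hne).2 hbr
        rw [hβT, ← inner_point_cnDir hab, point_T hab]
      · calc ⟪a, cnDir a b⟫ + β = ⟪a + β • cnDir a b, cnDir a b⟫ :=
              (inner_point_cnDir hab β).symm
          _ ≤ ‖a + β • cnDir a b‖ * ‖cnDir a b‖ := real_inner_le_norm _ _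
          _ ≤ r := by rw [norm_cnDir hab, mul_one]; exact hβmem.2
    have key2 : -(⟪a, cnDir a b⟫ + α) ≤ (if ‖a‖ ≤ r then -⟪a, cnDir a b⟫ else r) := by
      split_ifs with har
      · have hα0 : α = 0 := (sInf_eq_zero_iff hab hne).2 har
        rw [hα0, add_zero]
      · have h2 := real_inner_le_norm (-(a + α • cnDir a b)) (cnDir a b)
        rw [inner_neg_left, norm_neg] at h2
        rw [← inner_point_cnDir hab]
        refine h2.trans ?_
        rw [norm_cnDir hab, mul_one]; exact hαmem.2
    have hC : cnC a b r = (if ‖b‖ ≤ r then (0:ℝ) else 1) + (if ‖a‖ ≤ r then (0:ℝ) else 1) := by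
      rw [cnC, if_pos hne]
    rw [hlen, hC]
    split_ifs at key1 key2 ⊢ <;> nlinarith [key1, key2]
  · have h0 : cnLen a b r = 0 := by
      rw [cnLen, not_nonempty_iff_eq_empty.1 hne]; simp
    have hC : cnC a b r = 0 := by rw [cnC, if_neg hne]
    have hbr : ¬ ‖b‖ ≤ r := fun h => hne ⟨_, (T_mem_iff hab).2 h⟩
    have har : ¬ ‖a‖ ≤ r := fun h => hne ⟨_, (zero_mem_iff hab).2 h⟩
    rw [h0, hC, if_neg hbr, if_neg har]
    simp

/-- Per-edge derivative lower bound. -/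
lemma cnC_le_of_hasDerivAt (hab : a ≠ b) {r D : ℝ}
    (h : HasDerivAt (cnLen a b) D r) : cnC a b r ≤ D := by
  classical
  obtain ⟨δ, hδ, H⟩ : ∃ δ > 0, ∀ h' : ℝ, 0 < h' → h' < δ →
      cnLen a b r + cnC a b r * h' ≤ cnLen a b (r + h') := by
    by_cases hne : (cnS a b r).Nonempty
    · have hcpt := isCompact_cnS (a := a) (b := b) r
      set α := sInf (cnS a b r) with hα
      set β := sSup (cnS a b r) with hβ
      have hβmem : β ∈ cnS a b r := hcpt.sSup_mem hne
      have hαmem : α ∈ cnS a b r := hcpt.sInf_mem hne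
      set ca : ℝ := if ‖a‖ ≤ r then 0 else 1 with hca
      set cb : ℝ := if ‖b‖ ≤ r then 0 else 1 with hcb
      have hC : cnC a b r = cb + ca := by rw [cnC, if_pos hne]
      refine ⟨min (if ‖b‖ ≤ r then 1 else ‖b - a‖ - β) (if ‖a‖ ≤ r then 1 else α),
        ?_, ?_⟩
      · refine lt_min ?_ ?_
        · split_ifs with hbr
          · exact one_pos
          · have : β ≠ ‖b - a‖ := fun hc => hbr ((sSup_eq_T_iff hab hne).1 hc)
            have hle : β ≤ ‖b - a‖ := hβmem.1.2
            exact sub_pos.2 (lt_of_le_of_ne hle this)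
        · split_ifs with har
          · exact one_pos
          · have : α ≠ 0 := fun hc => har ((sInf_eq_zero_iff hab hne).1 hc)
            exact lt_of_le_of_ne hαmem.1.1 (Ne.symm this)
      · intro h' h'pos h'lt
        have hsub : Icc (α - ca * h') (β + cb * h') ⊆ cnS a b (r + h') := by
          intro t ⟨ht1, ht2⟩
          have hcb0 : 0 ≤ cb := by rw [hcb]; split_ifs <;> norm_num
          have hca0 : 0 ≤ ca := by rw [hca]; split_ifs <;> norm_num
          have hcb1 : cb ≤ 1 := by rw [hcb]; split_ifs <;> norm_num
          have hca1 : ca ≤ 1 := by rw [hca]; split_ifs <;> norm_num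
          refine ⟨⟨?_, ?_⟩, ?_⟩
          · by_cases har : ‖a‖ ≤ r
            · have : ca = 0 := by rw [hca, if_pos har]
              rw [this] at ht1
              simp only [mul_comm, mul_zero, sub_zero] at ht1
              exact le_trans hαmem.1.1 (by linarith)
            · have hδa : h' < α := lt_of_lt_of_le h'lt ((min_le_right _ _).trans (by rw [if_neg har]))
              nlinarith
          · by_cases hbr : ‖b‖ ≤ r
            · have : cb = 0 := by rw [hcb, if_pos hbr]
              rw [this] at ht2
              exact le_trans (by linarith) hβmem.1.2
            · have hδb : h' < ‖b - a‖ - β :=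
                lt_of_lt_of_le h'lt ((min_le_left _ _).trans (by rw [if_neg hbr]))
              nlinarith
          · rcases le_or_gt t β with hle | hgt
            · rcases le_or_gt α t with hge | hlt
              · have : t ∈ cnS a b r := by
                  rw [cnS_eq_Icc hab hne]; exact ⟨hge, hle⟩
                exact this.2.trans (by linarith)
              · have := cn_lip hab t α
                have habs : |t - α| ≤ h' := by
                  rw [abs_of_nonpos (by linarith)]
                  nlinarith
                calc ‖a + t • cnDir a b‖ ≤ ‖a + α • cnDir a b‖ + |t - α| := cn_lip hab t α
                  _ ≤ r + h' := add_le_add hαmem.2 habs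
            · have habs : |t - β| ≤ h' := by
                rw [abs_of_nonneg (by linarith)]
                nlinarith
              calc ‖a + t • cnDir a b‖ ≤ ‖a + β • cnDir a b‖ + |t - β| := cn_lip hab t β
                _ ≤ r + h' := add_le_add hβmem.2 habs
        have hvol : ENNReal.ofReal ((β + cb * h') - (α - ca * h'))
            ≤ volume (cnS a b (r + h')) := by
          rw [← Real.volume_Icc]
          exact measure_mono hsub
        have := ENNReal.toReal_mono (volume_cnS_ne_top (r + h')) hvol
        rw [ENNReal.toReal_ofReal] at this
        · rw [cnLen_eq hab hne, hC]
          calc (β - α) + (cb + ca) * h' = (β + cb * h') - (α - ca * h') := by ring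
            _ ≤ cnLen a b (r + h') := this
        · have h1 : α ≤ β := sInf_le_sSup_cnS hab hne
          have hcb0 : 0 ≤ cb := by rw [hcb]; split_ifs <;> norm_num
          have hca0 : 0 ≤ ca := by rw [hca]; split_ifs <;> norm_num
          nlinarith
    · refine ⟨1, one_pos, fun h' h'pos _ => ?_⟩
      have h0 : cnLen a b r = 0 := by
        rw [cnLen, not_nonempty_iff_eq_empty.1 hne]; simp
      have hC : cnC a b r = 0 := by rw [cnC, if_neg hne]
      rw [h0, hC, zero_mul, add_zero]
      exact cnLen_nonneg a b (r + h')
  -- now conclude from the difference quotient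
  have hslope : Tendsto (slope (cnLen a b) r) (𝓝[>] r) (𝓝 D) :=
    ((hasDerivAt_iff_tendsto_slope.1 h).mono_left
      (nhdsWithin_mono _ fun x hx => ne_of_gt hx))
  refine ge_of_tendsto hslope ?_
  filter_upwards [Ioo_mem_nhdsGT_of_mem ⟨le_rfl, lt_add_of_pos_right r hδ⟩] with x hx
  have hx1 : 0 < x - r := sub_pos.2 hx.1
  have hx2 : x - r < δ := by linarith [hx.2]
  have hH := H (x - r) hx1 hx2
  rw [add_sub_cancel] at hH
  rw [slope_def_field, le_div_iff₀ hx1]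
  linarith
section Meas
variable [MeasurableSpace E] [BorelSpace E]

lemma hausdorff_eq_cnLen (hab : a ≠ b) (r : ℝ) :
    (μH[1] (segment ℝ a b ∩ Metric.closedBall (0 : E) r)).toReal = cnLen a b r := by
  have hT : (0:ℝ) < ‖b - a‖ := norm_pos_iff.2 (sub_ne_zero.2 hab.symm)
  set γ : ℝ → E := fun t => a + t • cnDir a b with hγ
  have hiso : Isometry γ := by
    apply Isometry.of_dist_eq
    intro s t
    have h1 : γ s - γ t = (s - t) • cnDir a b := by
      simp only [hγ, sub_smul]; abel
    rw [dist_eq_norm, h1, norm_smul, norm_cnDir hab, mul_one, Real.dist_eq, Real.norm_eq_abs]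
  have hseg : segment ℝ a b = γ '' Icc (0:ℝ) ‖b - a‖ := by
    rw [segment_eq_image']
    ext z
    simp only [mem_image]
    constructor
    · rintro ⟨θ, ⟨h0, h1⟩, rfl⟩
      refine ⟨θ * ‖b - a‖, ⟨mul_nonneg h0 hT.le, by nlinarith⟩, ?_⟩
      rw [hγ]
      simp only
      rw [mul_smul, T_smul_cnDir hab]
    · rintro ⟨t, ⟨h0, hT'⟩, rfl⟩
      refine ⟨t / ‖b - a‖, ⟨div_nonneg h0 hT.le, (div_le_one hT).2 hT'⟩, ?_⟩
      have hsm : (t / ‖b - a‖) • (b - a) = t • cnDir a b := by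
        rw [cnDir, smul_smul, div_eq_mul_inv]
      rw [hγ]
      simp only
      rw [hsm]
  have hpre : Icc (0:ℝ) ‖b - a‖ ∩ γ ⁻¹' Metric.closedBall (0:E) r = cnS a b r := by
    ext t
    simp only [cnS, mem_inter_iff, mem_preimage, Metric.mem_closedBall, hγ, mem_setOf_eq,
      dist_zero_right]
  rw [hseg, ← image_inter_preimage, hpre, hiso.hausdorffMeasure_image (Or.inl zero_le_one),
    MeasureTheory.hausdorffMeasure_real]
  rfl

end Meas
/-- Right continuity of the edge length function along `r + 1/(n+1)`. -/
lemma cnLen_tendsto_right (a b : E) (r : ℝ) :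
    Tendsto (fun n : ℕ => cnLen a b (r + 1 / (n + 1))) atTop (𝓝 (cnLen a b r)) := by
  have hmeas : ∀ n : ℕ, NullMeasurableSet (cnS a b (r + 1 / (n + 1))) volume := fun n =>
    ((isCompact_cnS _).isClosed.measurableSet).nullMeasurableSet
  have hanti : Antitone fun n : ℕ => cnS a b (r + 1 / ((n : ℝ) + 1)) := by
    intro m n hmn
    apply cnS_mono
    have h1 : (0:ℝ) < (m:ℝ) + 1 := by positivity
    have h2 : (m:ℝ) + 1 ≤ (n:ℝ) + 1 := by exact_mod_cast Nat.succ_le_succ hmn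
    have h3 : 1 / ((n:ℝ) + 1) ≤ 1 / ((m:ℝ) + 1) := one_div_le_one_div_of_le h1 h2
    linarith
  have hfin : ∃ n : ℕ, volume (cnS a b (r + 1 / ((n : ℝ) + 1))) ≠ ⊤ := ⟨0, volume_cnS_ne_top _⟩
  have hint : ⋂ n : ℕ, cnS a b (r + 1 / ((n : ℝ) + 1)) = cnS a b r := by
    apply Subset.antisymm
    · intro t ht
      have h1 := mem_iInter.1 ht
      refine ⟨(h1 0).1, ?_⟩
      refine le_of_forall_pos_le_add fun ε hε => ?_
      obtain ⟨n, hn⟩ := exists_nat_one_div_lt hε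
      exact ((h1 n).2).trans (by linarith [hn.le])
    · intro t ht
      refine mem_iInter.2 fun n => ⟨ht.1, ht.2.trans ?_⟩
      have h1 : (0:ℝ) < (n:ℝ) + 1 := by positivity
      have h2 : 0 < 1 / ((n:ℝ) + 1) := one_div_pos.2 h1
      linarith
  have h2 := tendsto_measure_iInter_atTop hmeas hanti hfin
  rw [hint] at h2
  exact (ENNReal.tendsto_toReal (volume_cnS_ne_top r)).comp h2

/-- Key integral step: from the a.e. differential inequality we deduce a
logarithmic growth estimate. -/
lemma cn_key_integral {F : ℝ → ℝ} {r₁ r₂ : ℝ} (hr₁ : 0 < r₁)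
    (hF : Monotone F) (hrc : ∀ x : ℝ, Function.rightLim F x = F x)
    (hae : ∀ᵐ s : ℝ, r₁ < s → s < r₂ →
      F s ≤ s * (Measure.rnDeriv hF.stieltjesFunction.measure volume s).toReal) :
    ∀ a b : ℝ, r₁ ≤ a → a ≤ b → b ≤ r₂ → F a * Real.log (b / a) ≤ F b - F a := by
  intro a b ha hab hb
  set μ := hF.stieltjesFunction.measure with hμ
  set D := fun s => (μ.rnDeriv volume s).toReal with hD
  have h0a : 0 < a := hr₁.trans_le ha
  have h0b : 0 < b := h0a.trans_le hab
  have hμIoc : μ (Ioc a b) = ENNReal.ofReal (F b - F a) := by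
    rw [hμ, StieltjesFunction.measure_Ioc, Monotone.stieltjesFunction_eq,
      Monotone.stieltjesFunction_eq, hrc, hrc]
  have hμfin : μ (Ioc a b) ≠ ⊤ := by rw [hμIoc]; exact ENNReal.ofReal_ne_top
  have hlint : ∫⁻ s in Ioc a b, μ.rnDeriv volume s ∂volume ≤ μ (Ioc a b) :=
    Measure.setLIntegral_rnDeriv_le _
  have hDint : IntegrableOn D (Ioc a b) volume := by
    apply integrable_toReal_of_lintegral_ne_top
      (Measure.measurable_rnDeriv μ volume).aemeasurable
    exact (hlint.trans_lt (lt_top_iff_ne_top.2 hμfin)).ne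
  have hint1 : ∫ s in Ioc a b, D s ≤ (μ (Ioc a b)).toReal := by
    rw [hD]
    rw [integral_toReal ((Measure.measurable_rnDeriv μ volume).aemeasurable.restrict)
      (ae_restrict_of_ae (Measure.rnDeriv_lt_top μ volume))]
    exact ENNReal.toReal_mono hμfin hlint
  have hIinv : IntegrableOn (fun s : ℝ => F a * s⁻¹) (Ioc a b) volume := by
    apply Integrable.const_mul
    apply IntegrableOn.mono_set _ Ioc_subset_Icc_self
    apply ContinuousOn.integrableOn_Icc
    exact continuousOn_inv₀.mono fun s hs => ne_of_gt (h0a.trans_le hs.1)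
  have hneb : ∀ᵐ s : ℝ, s ≠ r₂ := by
    rw [ae_iff]
    have h3 : {s : ℝ | ¬s ≠ r₂} = {r₂} := by ext s; simp
    rw [h3, Real.volume_singleton]
  have hmono : ∀ᵐ s ∂volume.restrict (Ioc a b), F a * s⁻¹ ≤ D s := by
    filter_upwards [ae_restrict_mem measurableSet_Ioc, ae_restrict_of_ae hae,
      ae_restrict_of_ae hneb] with s hs h1 h2
    have hs0 : 0 < s := h0a.trans hs.1
    have hsr2 : s < r₂ := lt_of_le_of_ne (hs.2.trans hb) h2
    have h3 : F s ≤ s * D s := h1 (lt_of_le_of_lt ha hs.1) hsr2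
    have h4 : F a ≤ F s := hF (le_of_lt hs.1)
    calc F a * s⁻¹ ≤ (s * D s) * s⁻¹ :=
          mul_le_mul_of_nonneg_right (h4.trans h3) (inv_nonneg.2 hs0.le)
      _ = D s := by field_simp
  have hint2 : ∫ s in Ioc a b, F a * s⁻¹ ≤ ∫ s in Ioc a b, D s :=
    integral_mono_ae hIinv hDint hmono
  have hlog : ∫ s in Ioc a b, F a * s⁻¹ = F a * Real.log (b / a) := by
    rw [← intervalIntegral.integral_of_le hab, intervalIntegral.integral_const_mul,
      integral_inv (Set.notMem_uIcc_of_lt h0a h0b)]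
  have hfinal : (μ (Ioc a b)).toReal = F b - F a := by
    rw [hμIoc, ENNReal.toReal_ofReal (sub_nonneg.2 (hF hab))]
  linarith [hlog ▸ hint2, hfinal ▸ hint1]

/-- Discrete Grönwall iteration. -/
lemma cn_gronwall {F : ℝ → ℝ} {r₁ r₂ : ℝ} (hr₁ : 0 < r₁) (hr₁₂ : r₁ ≤ r₂)
    (hstep : ∀ a b : ℝ, r₁ ≤ a → a ≤ b → b ≤ r₂ → F a * Real.log (b / a) ≤ F b - F a) :
    F r₁ * (r₂ / r₁) ≤ F r₂ := by
  have hr₂ : 0 < r₂ := hr₁.trans_le hr₁₂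
  set x := Real.log (r₂ / r₁) with hx
  have hx0 : 0 ≤ x := Real.log_nonneg ((one_le_div hr₁).2 hr₁₂)
  have key : ∀ n : ℕ, 1 ≤ n → F r₁ * (1 + x / n) ^ n ≤ F r₂ := by
    intro n hn
    have hn0 : (0:ℝ) < n := by exact_mod_cast hn
    set a : ℕ → ℝ := fun i => r₁ * Real.exp (x * i / n) with ha
    have hmem : ∀ i : ℕ, i ≤ n → r₁ ≤ a i ∧ a i ≤ r₂ := by
      intro i hi
      constructor
      · simp only [ha]
        nlinarith [Real.one_le_exp (by positivity : (0:ℝ) ≤ x * i / n)]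
      · have h5 : x * i / n ≤ x := by
          rw [div_le_iff₀ hn0]
          have : (i:ℝ) ≤ (n:ℝ) := by exact_mod_cast hi
          nlinarith
        calc a i ≤ r₁ * Real.exp x := by
              simp only [ha]
              exact mul_le_mul_of_nonneg_left (Real.exp_le_exp.2 h5) hr₁.le
          _ = r₂ := by rw [hx, Real.exp_log (div_pos hr₂ hr₁)]; field_simp
    have hstep' : ∀ i : ℕ, i < n → F (a i) * (1 + x / n) ≤ F (a (i + 1)) := by
      intro i hi
      have hlog : Real.log (a (i + 1) / a i) = x / n := by
        simp only [ha]
        have hne : r₁ * Real.exp (x * i / n) ≠ 0 := by positivity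
        have h6 : r₁ * Real.exp (x * ((i:ℝ) + 1) / n) / (r₁ * Real.exp (x * i / n))
            = Real.exp (x / n) := by
          rw [mul_div_mul_left _ _ (ne_of_gt hr₁), ← Real.exp_sub]
          congr 1
          field_simp
          ring
        simp only [Nat.cast_add, Nat.cast_one]
        rw [h6, Real.log_exp]
      have hmono_a : a i ≤ a (i + 1) := by
        simp only [ha]
        apply mul_le_mul_of_nonneg_left _ hr₁.le
        apply Real.exp_le_exp.2
        push_cast
        rw [div_le_div_iff₀ hn0 hn0]
        nlinarith
      have h1 := hstep (a i) (a (i + 1)) (hmem i hi.le).1 hmono_a (hmem (i + 1) hi).2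
      rw [hlog] at h1
      linarith
    have hind : ∀ i : ℕ, i ≤ n → F r₁ * (1 + x / n) ^ i ≤ F (a i) := by
      intro i
      induction i with
      | zero => intro _; simp [ha]
      | succ i ih =>
        intro hi
        have h1 := ih (Nat.le_of_succ_le hi)
        have h2 := hstep' i (Nat.lt_of_succ_le hi)
        have hpos : (0:ℝ) ≤ 1 + x / n := by positivity
        calc F r₁ * (1 + x / n) ^ (i + 1) = F r₁ * (1 + x / n) ^ i * (1 + x / n) := by ring
          _ ≤ F (a i) * (1 + x / n) := mul_le_mul_of_nonneg_right h1 hpos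
          _ ≤ F (a (i + 1)) := h2
    have h8 := hind n le_rfl
    have han : a n = r₂ := by
      simp only [ha]
      rw [mul_div_assoc, div_self (ne_of_gt hn0), mul_one, hx,
        Real.exp_log (div_pos hr₂ hr₁)]
      field_simp
    rwa [han] at h8
  have hlim : Tendsto (fun n : ℕ => F r₁ * (1 + x / n) ^ n) atTop
      (𝓝 (F r₁ * Real.exp x)) := (Real.tendsto_one_add_div_pow_exp x).const_mul (F r₁)
  have h9 : F r₁ * Real.exp x ≤ F r₂ :=
    le_of_tendsto hlim (eventually_atTop.2 ⟨1, fun n hn => key n hn⟩)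
  rwa [hx, Real.exp_log (div_pos hr₂ hr₁)] at h9
lemma cnDir_symm (a b : E) : cnDir b a = -cnDir a b := by
  rw [cnDir, cnDir, norm_sub_rev, ← smul_neg, neg_sub]

end CritNetAux

/-- Let `(G, p)` be a finite critical net in `ℝ^k` satisfying the
balance condition and let `0 < r₁ ≤ r₂` with every leaf at distance at least `r₂` from
the origin.  With `L(r)` the length (1-dimensional Hausdorff measure) of the net inside
the closed ball of radius `r` (sums over unordered edges written as half the sums over
ordered pairs of adjacent vertices), the length density is monotone:
`L(r₁)/r₁ ≤ L(r₂)/r₂`. -/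
theorem length_density_monotone
    {k : ℕ} (hk : 1 ≤ k) {V : Type*} [Fintype V] [DecidableEq V]
    (G : SimpleGraph V) [DecidableRel G.Adj]
    (p : V → EuclideanSpace ℝ (Fin k)) (hinj : Function.Injective p)
    (hdeg1 : ∀ x : V, 1 ≤ G.degree x)
    (hnoLL : ∀ x y : V, G.Adj x y → ¬(G.degree x = 1 ∧ G.degree y = 1))
    (hbal : ∀ x : V, 2 ≤ G.degree x →
      ∑ y ∈ G.neighborFinset x, (‖p x - p y‖)⁻¹ • (p x - p y) = 0)
    (r₁ r₂ : ℝ) (hr₁ : 0 < r₁) (hr₁₂ : r₁ ≤ r₂)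
    (hleafout : ∀ l : V, G.degree l = 1 → r₂ ≤ ‖p l‖) :
    ((1 / 2 : ℝ) * ∑ x : V, ∑ y ∈ G.neighborFinset x,
        (μH[1] (segment ℝ (p x) (p y) ∩ Metric.closedBall (0 : EuclideanSpace ℝ (Fin k)) r₁)).toReal) / r₁
      ≤ ((1 / 2 : ℝ) * ∑ x : V, ∑ y ∈ G.neighborFinset x,
          (μH[1] (segment ℝ (p x) (p y) ∩ Metric.closedBall (0 : EuclideanSpace ℝ (Fin k)) r₂)).toReal) / r₂ := by
  classical
  have hr₂ : 0 < r₂ := hr₁.trans_le hr₁₂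
  set F : ℝ → ℝ := fun s => ∑ x : V, ∑ y ∈ G.neighborFinset x, cnLen (p y) (p x) s with hFdef
  have hpne : ∀ {x y : V}, G.Adj x y → p y ≠ p x := fun h hpq =>
    (h.ne) (hinj hpq).symm
  have hFmono : Monotone F := by
    intro r r' hrr'
    apply Finset.sum_le_sum; intro x _
    apply Finset.sum_le_sum; intro y _
    exact cnLen_mono _ _ hrr'
  have hrepr : ∀ r : ℝ, (∑ x : V, ∑ y ∈ G.neighborFinset x,
      (μH[1] (segment ℝ (p x) (p y) ∩
        Metric.closedBall (0 : EuclideanSpace ℝ (Fin k)) r)).toReal) = F r := by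
    intro r
    apply Finset.sum_congr rfl; intro x _
    apply Finset.sum_congr rfl; intro y hy
    rw [segment_symm]
    exact hausdorff_eq_cnLen (hpne ((SimpleGraph.mem_neighborFinset _ _ _).1 hy)) r
  have hrc : ∀ r : ℝ, Function.rightLim F r = F r := by
    intro r
    have htd : Tendsto (fun n : ℕ => F (r + 1 / (n + 1))) atTop (𝓝 (F r)) := by
      apply tendsto_finset_sum
      intro x _
      apply tendsto_finset_sum
      intro y _
      exact cnLen_tendsto_right _ _ r
    refine le_antisymm ?_ (Monotone.le_rightLim hFmono le_rfl)
    refine ge_of_tendsto htd (Eventually.of_forall fun n => ?_)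
    apply Monotone.rightLim_le hFmono
    have : (0:ℝ) < 1 / ((n:ℝ) + 1) := by positivity
    linarith
  -- swap lemma for double sums over adjacency
  have hswap : ∀ g : V → V → ℝ, ∑ x : V, ∑ y ∈ G.neighborFinset x, g x y
      = ∑ x : V, ∑ y ∈ G.neighborFinset x, g y x := by
    intro g
    have h1 : ∀ h : V → V → ℝ, ∀ x : V, ∑ y ∈ G.neighborFinset x, h x y
        = ∑ y : V, if G.Adj x y then h x y else 0 := by
      intro h x
      rw [SimpleGraph.neighborFinset_eq_filter, Finset.sum_filter]
    calc ∑ x : V, ∑ y ∈ G.neighborFinset x, g x y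
        = ∑ x : V, ∑ y : V, if G.Adj x y then g x y else 0 := by
          exact Finset.sum_congr rfl fun x _ => h1 g x
      _ = ∑ y : V, ∑ x : V, if G.Adj x y then g x y else 0 := Finset.sum_comm
      _ = ∑ x : V, ∑ y : V, if G.Adj x y then g y x else 0 := by
          refine Finset.sum_congr rfl fun x _ => Finset.sum_congr rfl fun y _ => ?_
          exact if_congr (G.adj_comm y x) rfl rfl
      _ = ∑ x : V, ∑ y ∈ G.neighborFinset x, g y x := by
          exact Finset.sum_congr rfl fun x _ => (h1 (fun x y => g y x) x).symm
  -- stationarity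
  have hstat : ∀ s : ℝ, 0 < s → s < r₂ →
      F s ≤ s * ∑ x : V, ∑ y ∈ G.neighborFinset x, cnC (p y) (p x) s := by
    intro s hs hsr₂
    have hbal' : ∀ x : V, ‖p x‖ ≤ s →
        ∑ y ∈ G.neighborFinset x, ⟪p x, cnDir (p y) (p x)⟫ = 0 := by
      intro x hx
      have hdeg : 2 ≤ G.degree x := by
        rcases Nat.lt_or_ge (G.degree x) 2 with h | h
        · have h1 : G.degree x = 1 := le_antisymm (Nat.lt_succ_iff.1 h) (hdeg1 x)
          have h2 := hleafout x h1
          linarith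
        · exact h
      have h3 := hbal x hdeg
      have h6 : ∑ y ∈ G.neighborFinset x, ⟪p x, cnDir (p y) (p x)⟫
          = ⟪p x, ∑ y ∈ G.neighborFinset x, (‖p x - p y‖)⁻¹ • (p x - p y)⟫ := by
        rw [inner_sum]
        rfl
      rw [h6, h3, inner_zero_right]
    have hterm2 : ∀ x : V, (∑ y ∈ G.neighborFinset x,
        if ‖p x‖ ≤ s then ⟪p x, cnDir (p y) (p x)⟫ else 0) = 0 := by
      intro x
      by_cases hx : ‖p x‖ ≤ s
      · simp only [if_pos hx]; exact hbal' x hx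
      · simp [if_neg hx]
    have e2 : (∑ x : V, ∑ y ∈ G.neighborFinset x,
        if ‖p x‖ ≤ s then ⟪p x, cnDir (p y) (p x)⟫ else 0) = 0 :=
      Finset.sum_eq_zero fun x _ => hterm2 x
    have e3 : (∑ x : V, ∑ y ∈ G.neighborFinset x,
        if ‖p y‖ ≤ s then -⟪p y, cnDir (p y) (p x)⟫ else 0) = 0 := by
      have h5 : ∀ x y : V, (if ‖p y‖ ≤ s then -⟪p y, cnDir (p y) (p x)⟫ else 0)
          = (if ‖p y‖ ≤ s then ⟪p y, cnDir (p x) (p y)⟫ else 0) := by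
        intro x y
        rw [cnDir_symm (p x) (p y), inner_neg_right, neg_neg]
      simp only [h5]
      calc ∑ x : V, ∑ y ∈ G.neighborFinset x,
            (if ‖p y‖ ≤ s then ⟪p y, cnDir (p x) (p y)⟫ else (0:ℝ))
          = ∑ x : V, ∑ y ∈ G.neighborFinset x,
            (if ‖p x‖ ≤ s then ⟪p x, cnDir (p y) (p x)⟫ else (0:ℝ)) := (hswap _).symm
        _ = 0 := e2
    calc F s = ∑ x : V, ∑ y ∈ G.neighborFinset x, cnLen (p y) (p x) s := rfl
      _ ≤ ∑ x : V, ∑ y ∈ G.neighborFinset x, ((s * cnC (p y) (p x) s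
          + if ‖p x‖ ≤ s then ⟪p x, cnDir (p y) (p x)⟫ else 0)
          + if ‖p y‖ ≤ s then -⟪p y, cnDir (p y) (p x)⟫ else 0) := by
        apply Finset.sum_le_sum; intro x _
        apply Finset.sum_le_sum; intro y hy
        exact cnLen_le (hpne ((SimpleGraph.mem_neighborFinset _ _ _).1 hy)) hs
      _ = s * (∑ x : V, ∑ y ∈ G.neighborFinset x, cnC (p y) (p x) s)
          + (∑ x : V, ∑ y ∈ G.neighborFinset x,
              if ‖p x‖ ≤ s then ⟪p x, cnDir (p y) (p x)⟫ else 0)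
          + (∑ x : V, ∑ y ∈ G.neighborFinset x,
              if ‖p y‖ ≤ s then -⟪p y, cnDir (p y) (p x)⟫ else 0) := by
        simp only [Finset.sum_add_distrib, Finset.mul_sum]
      _ = s * ∑ x : V, ∑ y ∈ G.neighborFinset x, cnC (p y) (p x) s := by
        rw [e2, e3, add_zero, add_zero]
  -- a.e. differential inequality
  have hae : ∀ᵐ s : ℝ, r₁ < s → s < r₂ →
      F s ≤ s * (Measure.rnDeriv hFmono.stieltjesFunction.measure volume s).toReal := by
    have hedge : ∀ᵐ s : ℝ, ∀ x y : V, DifferentiableAt ℝ (cnLen (p y) (p x)) s :=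
      ae_all_iff.2 fun x => ae_all_iff.2 fun y => (cnLen_mono (p y) (p x)).ae_differentiableAt
    filter_upwards [hedge, hFmono.ae_hasDerivAt] with s hdiff hFd h1 h2
    have hs : 0 < s := hr₁.trans h1
    have hsum : HasDerivAt F
        (∑ x : V, ∑ y ∈ G.neighborFinset x, deriv (cnLen (p y) (p x)) s) s := by
      apply HasDerivAt.fun_sum
      intro x _
      apply HasDerivAt.fun_sum
      intro y _
      exact (hdiff x y).hasDerivAt
    have hDF : (Measure.rnDeriv hFmono.stieltjesFunction.measure volume s).toReal
        = ∑ x : V, ∑ y ∈ G.neighborFinset x, deriv (cnLen (p y) (p x)) s :=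
      hFd.unique hsum
    rw [hDF]
    refine (hstat s hs h2).trans ?_
    apply mul_le_mul_of_nonneg_left _ hs.le
    apply Finset.sum_le_sum; intro x _
    apply Finset.sum_le_sum; intro y hy
    exact cnC_le_of_hasDerivAt (hpne ((SimpleGraph.mem_neighborFinset _ _ _).1 hy))
      ((hdiff x y).hasDerivAt)
  have hgron : F r₁ * (r₂ / r₁) ≤ F r₂ :=
    cn_gronwall hr₁ hr₁₂ (cn_key_integral hr₁ hFmono hrc hae)
  rw [hrepr r₁, hrepr r₂, div_le_div_iff₀ hr₁ hr₂]
  have h3 : F r₁ * r₂ ≤ F r₂ * r₁ := by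
    have h4 := mul_le_mul_of_nonneg_right hgron hr₁.le
    calc F r₁ * r₂ = F r₁ * (r₂ / r₁) * r₁ := by field_simp
      _ ≤ F r₂ * r₁ := h4
  linarith
end

section
/- Let (G, p) be a finite critical net in ℝ^k satisfying the balance condition. Then for every e ∈ EuclideanSpace ℝ (Fin k), the following vector identity holds: 2 ∑ ⟪p y − p x, e⟫ · (p y − p x)/‖p y − p x‖ = ∑_{l ∈ ∂X} ( ⟪p n_l, e⟫ · u_l + ⟪u_l, e⟫ · p n_l ), where the left-hand sum runs over the unordered edges {x,y} of G whose two endpoints are both interior (the summand does not depend on the orientation of the edge). -/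
/-!
At an interior vertex `x` the balance condition says that the unit vectors `u(x,y)` from the
neighbours `y` towards `x` sum to zero, so the same holds after applying the symmetrised outer
product `B(a, u) = ⟪a, e⟫ • u + ⟪u, e⟫ • a` with `a = p x` fixed. Summing these relations over
all interior vertices, an edge between interior vertices `x, y` appears twice and contributes
`B(p x - p y, u(x,y)) = 2 ⟪p x - p y, e⟫ • u(x,y)`, while the edge from a leaf `l` to its
neighbour `n_l` appears once, contributing `-B(p n_l, u_l)`.
-/

open scoped RealInnerProductSpace
open Finset

namespace SimpleGraph

variable {V : Type*} [Fintype V] (G : SimpleGraph V) [DecidableRel G.Adj]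

theorem sum_sum_neighborFinset_filter_comm {M : Type*} [AddCommMonoid M]
    (P Q : V → Prop) [DecidablePred P] [DecidablePred Q] (f : V → V → M) :
    ∑ x ∈ univ.filter P, ∑ y ∈ (G.neighborFinset x).filter Q, f x y =
      ∑ y ∈ univ.filter Q, ∑ x ∈ (G.neighborFinset y).filter P, f x y :=
  sum_comm' fun x y => by
    simp only [mem_filter, mem_univ, true_and, mem_neighborFinset, G.adj_comm x y]
    tauto

theorem sum_sum_neighborFinset_filter_swap {M : Type*} [AddCommMonoid M]
    (P : V → Prop) [DecidablePred P] (f : V → V → M) :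
    ∑ x ∈ univ.filter P, ∑ y ∈ (G.neighborFinset x).filter P, f y x =
      ∑ x ∈ univ.filter P, ∑ y ∈ (G.neighborFinset x).filter P, f x y :=
  G.sum_sum_neighborFinset_filter_comm P P fun x y => f y x

theorem neighborFinset_eq_singleton_of_degree_eq_one {l m : V} (hl : G.degree l = 1)
    (hm : G.Adj l m) : G.neighborFinset l = {m} :=
  (eq_of_subset_of_card_le (singleton_subset_iff.2 ((G.mem_neighborFinset l m).2 hm))
    (by rw [card_neighborFinset_eq_degree, hl, card_singleton])).symm

/-- A discrete divergence theorem. -/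
theorem sum_sum_interior_eq_neg_sum_leaves {M : Type*} [AddCommGroup M]
    (hdeg : ∀ x, 1 ≤ G.degree x)
    (hleaves : ∀ x y, G.Adj x y → ¬(G.degree x = 1 ∧ G.degree y = 1))
    (n : V → V) (hn : ∀ l, G.degree l = 1 → G.Adj l (n l))
    (f : V → V → M) (hf : ∀ x, 2 ≤ G.degree x → ∑ y ∈ G.neighborFinset x, f x y = 0) :
    ∑ x ∈ univ.filter (2 ≤ G.degree ·), ∑ y ∈ (G.neighborFinset x).filter (2 ≤ G.degree ·),
        f x y =
      -∑ l ∈ univ.filter (G.degree · = 1), f (n l) l := by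
  have hnot_interior (x : V) : (G.neighborFinset x).filter (¬2 ≤ G.degree ·) =
      (G.neighborFinset x).filter (G.degree · = 1) :=
    filter_congr fun y _ => by have := hdeg y; omega
  have hleaf_edges : ∑ x ∈ univ.filter (2 ≤ G.degree ·),
      ∑ y ∈ (G.neighborFinset x).filter (G.degree · = 1), f x y =
        ∑ l ∈ univ.filter (G.degree · = 1), f (n l) l := by
    rw [sum_sum_neighborFinset_filter_comm]
    refine sum_congr rfl fun l hl => ?_
    have hl : G.degree l = 1 := (mem_filter.1 hl).2
    have hnl : 2 ≤ G.degree (n l) := by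
      have := hleaves l (n l) (hn l hl); have := hdeg (n l); omega
    rw [G.neighborFinset_eq_singleton_of_degree_eq_one hl (hn l hl), filter_singleton,
      if_pos hnl, sum_singleton]
  rw [eq_neg_iff_add_eq_zero, ← hleaf_edges, ← sum_add_distrib]
  refine sum_eq_zero fun x hx => ?_
  rw [← hnot_interior, sum_filter_add_sum_filter_not]
  exact hf x (mem_filter.1 hx).2

end SimpleGraph

section InnerProductSpace

variable {E : Type*} [NormedAddCommGroup E] [InnerProductSpace ℝ E]

def symmOuter (e : E) : E →ₗ[ℝ] E →ₗ[ℝ] E :=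
  LinearMap.mk₂ ℝ (fun a u => ⟪a, e⟫ • u + ⟪u, e⟫ • a)
    (fun a a' u => by simp only [inner_add_left, add_smul, smul_add]; abel)
    (fun c a u => by simp only [real_inner_smul_left, smul_smul, smul_add, mul_comm])
    (fun a u u' => by simp only [inner_add_left, add_smul, smul_add]; abel)
    (fun c a u => by simp only [real_inner_smul_left, smul_smul, smul_add, mul_comm])

theorem symmOuter_apply (e a u : E) : symmOuter e a u = ⟪a, e⟫ • u + ⟪u, e⟫ • a := rfl

noncomputable def unitDir (a b : E) : E := ‖a - b‖⁻¹ • (a - b)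

theorem unitDir_swap (a b : E) : unitDir b a = -unitDir a b := by
  rw [unitDir, unitDir, ← neg_sub a b, norm_neg, smul_neg]

theorem symmOuter_sub_unitDir (e a b : E) :
    symmOuter e (a - b) (unitDir a b) = (2 : ℝ) • (⟪a - b, e⟫ • unitDir a b) := by
  rw [symmOuter_apply, unitDir, real_inner_smul_left, smul_smul, mul_comm, ← smul_smul]
  module

theorem symmOuter_add_symmOuter_swap (e a b : E) :
    symmOuter e a (unitDir a b) + symmOuter e b (unitDir b a) =
      (2 : ℝ) • (⟪a - b, e⟫ • unitDir a b) := by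
  rw [unitDir_swap a b, map_neg, ← sub_eq_add_neg, ← LinearMap.sub_apply, ← map_sub,
    symmOuter_sub_unitDir]

end InnerProductSpace

theorem dilation_identity_general
    {k : ℕ} {V : Type*} [Fintype V]
    (G : SimpleGraph V) [DecidableRel G.Adj]
    (p : V → EuclideanSpace ℝ (Fin k))
    (hdeg1 : ∀ x : V, 1 ≤ G.degree x)
    (hnoLL : ∀ x y : V, G.Adj x y → ¬(G.degree x = 1 ∧ G.degree y = 1))
    (hbal : ∀ x : V, 2 ≤ G.degree x →
      ∑ y ∈ G.neighborFinset x, (‖p x - p y‖)⁻¹ • (p x - p y) = 0)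
    (n : V → V) (hn : ∀ l : V, G.degree l = 1 → G.Adj l (n l))
    (e : EuclideanSpace ℝ (Fin k)) :
    (2 : ℝ) • ((1 / 2 : ℝ) •
        ∑ x ∈ Finset.univ.filter (fun x : V => 2 ≤ G.degree x),
          ∑ y ∈ (G.neighborFinset x).filter (fun y => 2 ≤ G.degree y),
            ⟪p y - p x, e⟫ • ((‖p y - p x‖)⁻¹ • (p y - p x)))
      = ∑ l ∈ Finset.univ.filter (fun l : V => G.degree l = 1),
          (⟪p (n l), e⟫ • ((‖p l - p (n l)‖)⁻¹ • (p l - p (n l)))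
            + ⟪(‖p l - p (n l)‖)⁻¹ • (p l - p (n l)), e⟫ • p (n l)) := by
  set h : V → V → EuclideanSpace ℝ (Fin k) := fun x y => symmOuter e (p x) (unitDir (p x) (p y))
  have hflux (x : V) (hx : 2 ≤ G.degree x) : ∑ y ∈ G.neighborFinset x, h x y = 0 := by
    rw [← map_sum]
    exact (congrArg _ (hbal x hx)).trans (map_zero _)
  calc _ = (1 / 2 : ℝ) • ∑ x ∈ univ.filter (2 ≤ G.degree ·),
        ∑ y ∈ (G.neighborFinset x).filter (2 ≤ G.degree ·), (h y x + h x y) := by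
        simp only [h, symmOuter_add_symmOuter_swap, smul_comm (2 : ℝ) (1 / 2 : ℝ), smul_sum]
        rfl
    _ = ∑ x ∈ univ.filter (2 ≤ G.degree ·),
        ∑ y ∈ (G.neighborFinset x).filter (2 ≤ G.degree ·), h x y := by
        rw [sum_congr rfl fun x _ => sum_add_distrib, sum_add_distrib,
          G.sum_sum_neighborFinset_filter_swap, ← two_smul ℝ, smul_smul]
        norm_num
    _ = -∑ l ∈ univ.filter (G.degree · = 1), h (n l) l :=
        G.sum_sum_interior_eq_neg_sum_leaves hdeg1 hnoLL n hn h hflux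
    _ = _ := by
        rw [← sum_neg_distrib]
        refine sum_congr rfl fun l _ => ?_
        simp only [h, unitDir_swap (p l), map_neg, neg_neg]
        rfl

/-- In a finite critical net in `ℝ^k` satisfying the balance
condition, for every `e` one has the vector identity
`2 ∑_{edges {x,y} interior} ⟪p y − p x, e⟫ • (p y − p x)/‖p y − p x‖
  = ∑_{l ∈ ∂X} (⟪p n_l, e⟫ • u_l + ⟪u_l, e⟫ • p n_l)`,
the left-hand sum over unordered interior edges being written as half the sum over
ordered pairs of adjacent interior vertices. -/
theorem dilation_identity
    {k : ℕ} (hk : 1 ≤ k) {V : Type*} [Fintype V] [DecidableEq V]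
    (G : SimpleGraph V) [DecidableRel G.Adj]
    (p : V → EuclideanSpace ℝ (Fin k)) (hinj : Function.Injective p)
    (hdeg1 : ∀ x : V, 1 ≤ G.degree x)
    (hnoLL : ∀ x y : V, G.Adj x y → ¬(G.degree x = 1 ∧ G.degree y = 1))
    (hbal : ∀ x : V, 2 ≤ G.degree x →
      ∑ y ∈ G.neighborFinset x, (‖p x - p y‖)⁻¹ • (p x - p y) = 0)
    (n : V → V) (hn : ∀ l : V, G.degree l = 1 → G.Adj l (n l))
    (e : EuclideanSpace ℝ (Fin k)) :
    (2 : ℝ) • ((1 / 2 : ℝ) •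
        ∑ x ∈ Finset.univ.filter (fun x : V => 2 ≤ G.degree x),
          ∑ y ∈ (G.neighborFinset x).filter (fun y => 2 ≤ G.degree y),
            ⟪p y - p x, e⟫ • ((‖p y - p x‖)⁻¹ • (p y - p x)))
      = ∑ l ∈ Finset.univ.filter (fun l : V => G.degree l = 1),
          (⟪p (n l), e⟫ • ((‖p l - p (n l)‖)⁻¹ • (p l - p (n l)))
            + ⟪(‖p l - p (n l)‖)⁻¹ • (p l - p (n l)), e⟫ • p (n l)) :=
  dilation_identity_general G p hdeg1 hnoLL hbal n hn e
end
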